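/- arXiv:2109.03167 — 2 statements merged into one kernel-verified Lean document; each statement's English description precedes it below -/
import Mathlib

section
/- Let α > 0, and let u, f be real numbers with u ≥ f² ≥ 0 and u ≤ ((2α+1)/(2α)) f² + 1/(2α). Then f² + 2(u - f²) - 2u(u - f²)(α+1)/(1+u) ≥ 0. -/
theorem theta_nonneg (α u f : ℝ) (hα : 0 < α)
    (hf : 0 ≤ f ^ 2) (hu : f ^ 2 ≤ u)
    (hub : u ≤ (2 * α + 1) / (2 * α) * f ^ 2 + 1 / (2 * α)) :
    0 ≤ f ^ 2 + 2 * (u - f ^ 2) - 2 * u * (u - f ^ 2) * (α + 1) / (1 + u) := by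
  have hu0 : 0 ≤ u := le_trans hf hu
  have hu1 : 0 < 1 + u := by linarith
  have h2 : 2 * α * (u - f ^ 2) ≤ f ^ 2 + 1 := by
    have h := mul_le_mul_of_nonneg_left hub (le_of_lt (by linarith : (0:ℝ) < 2 * α))
    field_simp at h
    nlinarith
  have key : 0 ≤ (f ^ 2 + 2 * (u - f ^ 2)) * (1 + u) - 2 * u * (u - f ^ 2) * (α + 1) := by
    nlinarith [mul_nonneg hu0 (by linarith : 0 ≤ f ^ 2 + 1 - 2 * α * (u - f ^ 2))]
  rw [show f ^ 2 + 2 * (u - f ^ 2) - 2 * u * (u - f ^ 2) * (α + 1) / (1 + u)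
      = ((f ^ 2 + 2 * (u - f ^ 2)) * (1 + u) - 2 * u * (u - f ^ 2) * (α + 1)) / (1 + u) from by
        field_simp]
  exact div_nonneg key hu1.le
end

section
/- The map ψ : ℝ² → ℝ⁴ defined by ψ(x,y) = (x - x³/3 + x y², -y - x² y + y³/3, x² - y², √2 x - (√2/3) x³ + √2 x y²) is a spacelike immersion into 𝕃⁴ whose induced metric on ℝ² is g = (1 + x² + y²)² (dx² + dy²). -/
/-- The Lorentzian bilinear form of 𝕃⁴ = (ℝ⁴, -dx₁² + dx₂² + dx₃² + dx₄²). -/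
def lorentz (u v : Fin 4 → ℝ) : ℝ :=
  -(u 0 * v 0) + u 1 * v 1 + u 2 * v 2 + u 3 * v 3

open ContinuousLinearMap

private lemma hasFDerivAt_of_eq {p : ℝ × ℝ} {f g : ℝ × ℝ → ℝ} {L M : ℝ × ℝ →L[ℝ] ℝ}
    (h : HasFDerivAt f L p) (hfg : ∀ q, f q = g q) (hLM : ∀ v, L v = M v) :
    HasFDerivAt g M p := by
  have h1 : f = g := funext hfg
  have h2 : L = M := ContinuousLinearMap.ext hLM
  rw [h1, h2] at h; exact h

private noncomputable def dmap (c d : ℝ) : ℝ × ℝ →L[ℝ] ℝ := c • fst ℝ ℝ ℝ + d • snd ℝ ℝ ℝ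

private lemma dmap_apply (c d : ℝ) (v : ℝ × ℝ) : dmap c d v = c * v.1 + d * v.2 := by
  simp [dmap]

private noncomputable def Lp (p : ℝ × ℝ) : ℝ × ℝ →L[ℝ] (Fin 4 → ℝ) :=
  pi ![dmap (1 - p.1 ^ 2 + p.2 ^ 2) (2 * p.1 * p.2),
       dmap (-(2 * p.1 * p.2)) (-1 - p.1 ^ 2 + p.2 ^ 2),
       dmap (2 * p.1) (-(2 * p.2)),
       dmap (Real.sqrt 2 * (1 - p.1 ^ 2 + p.2 ^ 2)) (Real.sqrt 2 * (2 * p.1 * p.2))]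

theorem psi_spacelike_immersion (ψ : ℝ × ℝ → Fin 4 → ℝ)
    (hψ : ∀ p : ℝ × ℝ, ψ p =
      ![p.1 - p.1 ^ 3 / 3 + p.1 * p.2 ^ 2,
        -p.2 - p.1 ^ 2 * p.2 + p.2 ^ 3 / 3,
        p.1 ^ 2 - p.2 ^ 2,
        Real.sqrt 2 * p.1 - (Real.sqrt 2 / 3) * p.1 ^ 3 + Real.sqrt 2 * p.1 * p.2 ^ 2]) :
    Differentiable ℝ ψ ∧
    (∀ p : ℝ × ℝ, ∀ v : ℝ × ℝ, v ≠ 0 → fderiv ℝ ψ p v ≠ 0) ∧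
    (∀ p : ℝ × ℝ, ∀ v : ℝ × ℝ, v ≠ 0 → 0 < lorentz (fderiv ℝ ψ p v) (fderiv ℝ ψ p v)) ∧
    (∀ p : ℝ × ℝ, ∀ v v' : ℝ × ℝ,
      lorentz (fderiv ℝ ψ p v) (fderiv ℝ ψ p v') =
        (1 + p.1 ^ 2 + p.2 ^ 2) ^ 2 * (v.1 * v'.1 + v.2 * v'.2)) := by
  have hs : Real.sqrt 2 * Real.sqrt 2 = 2 := Real.mul_self_sqrt (by norm_num)
  have hD : ∀ p : ℝ × ℝ, HasFDerivAt ψ (Lp p) p := by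
    intro p
    have h1 : HasFDerivAt (fun q : ℝ × ℝ => q.1) (fst ℝ ℝ ℝ) p := hasFDerivAt_fst
    have h2 : HasFDerivAt (fun q : ℝ × ℝ => q.2) (snd ℝ ℝ ℝ) p := hasFDerivAt_snd
    refine hasFDerivAt_pi'' fun i => ?_
    have hcomp : ∀ i, (fun x => ψ x i) = fun x : ℝ × ℝ =>
      ![x.1 - x.1 ^ 3 / 3 + x.1 * x.2 ^ 2,
        -x.2 - x.1 ^ 2 * x.2 + x.2 ^ 3 / 3,
        x.1 ^ 2 - x.2 ^ 2,
        Real.sqrt 2 * x.1 - (Real.sqrt 2 / 3) * x.1 ^ 3 + Real.sqrt 2 * x.1 * x.2 ^ 2] i := by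
      intro i; funext x; rw [hψ x]
    rw [hcomp]
    fin_cases i
    · refine hasFDerivAt_of_eq
        ((h1.sub ((h1.mul (h1.mul h1)).const_mul ((3:ℝ)⁻¹))).add (h1.mul (h2.mul h2)))
        (fun q => by simp; ring)
        (fun v => by simp [Lp, dmap_apply]; ring)
    · refine hasFDerivAt_of_eq
        (((h2.neg).sub ((h1.mul h1).mul h2)).add ((h2.mul (h2.mul h2)).const_mul ((3:ℝ)⁻¹)))
        (fun q => by simp; ring)
        (fun v => by simp [Lp, dmap_apply]; ring)
    · refine hasFDerivAt_of_eq ((h1.mul h1).sub (h2.mul h2))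
        (fun q => by simp; ring)
        (fun v => by simp [Lp, dmap_apply]; ring)
    · refine hasFDerivAt_of_eq
        (((h1.const_mul (Real.sqrt 2)).sub ((h1.mul (h1.mul h1)).const_mul
          (Real.sqrt 2 / 3))).add ((h1.mul (h2.mul h2)).const_mul (Real.sqrt 2)))
        (fun q => by simp; ring)
        (fun v => by simp [Lp, dmap_apply]; ring)
  have hfd : ∀ p : ℝ × ℝ, fderiv ℝ ψ p = Lp p := fun p => (hD p).fderiv
  have happ : ∀ (p v : ℝ × ℝ) (i : Fin 4), fderiv ℝ ψ p v i = Lp p v i := by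
    intro p v i; rw [hfd]
  have hval : ∀ (p v : ℝ × ℝ),
      fderiv ℝ ψ p v 0 = (1 - p.1 ^ 2 + p.2 ^ 2) * v.1 + 2 * p.1 * p.2 * v.2 ∧
      fderiv ℝ ψ p v 1 = -(2 * p.1 * p.2) * v.1 + (-1 - p.1 ^ 2 + p.2 ^ 2) * v.2 ∧
      fderiv ℝ ψ p v 2 = 2 * p.1 * v.1 + -(2 * p.2) * v.2 ∧
      fderiv ℝ ψ p v 3 = Real.sqrt 2 * (1 - p.1 ^ 2 + p.2 ^ 2) * v.1 +
        Real.sqrt 2 * (2 * p.1 * p.2) * v.2 := by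
    intro p v
    refine ⟨?_, ?_, ?_, ?_⟩ <;> rw [happ] <;> simp [Lp, dmap_apply]
  have key : ∀ (p v v' : ℝ × ℝ),
      lorentz (fderiv ℝ ψ p v) (fderiv ℝ ψ p v') =
        (1 + p.1 ^ 2 + p.2 ^ 2) ^ 2 * (v.1 * v'.1 + v.2 * v'.2) := by
    intro p v v'
    obtain ⟨e0, e1, e2, e3⟩ := hval p v
    obtain ⟨f0, f1, f2, f3⟩ := hval p v'
    rw [lorentz, e0, e1, e2, e3, f0, f1, f2, f3]
    linear_combination (((1 - p.1 ^ 2 + p.2 ^ 2) * v.1 + 2 * p.1 * p.2 * v.2) *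
      ((1 - p.1 ^ 2 + p.2 ^ 2) * v'.1 + 2 * p.1 * p.2 * v'.2)) * hs
  have hpos : ∀ (p v : ℝ × ℝ), v ≠ 0 → 0 < lorentz (fderiv ℝ ψ p v) (fderiv ℝ ψ p v) := by
    intro p v hv
    rw [key]
    have h2 : 0 < v.1 * v.1 + v.2 * v.2 := by
      have h : v.1 ≠ 0 ∨ v.2 ≠ 0 := by
        by_contra hc
        push_neg at hc
        exact hv (Prod.ext hc.1 hc.2)
      rcases h with h | h <;> nlinarith [mul_self_nonneg v.1, mul_self_nonneg v.2,
        mul_self_pos.2 h]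
    exact mul_pos (pow_pos (by positivity) 2) h2
  refine ⟨fun p => (hD p).differentiableAt, ?_, hpos, key⟩
  intro p v hv h0
  have hlt := hpos p v hv
  rw [h0] at hlt
  simp [lorentz] at hlt
end
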